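/- Let g ∈ ℝ³, g ≠ 0, k > 0. For the flow ğ̇ = k(ğ × g) × ğ on 𝕊²_g, the equilibrium ğ = g is asymptotically stable and its basin of attraction contains 𝕊²_g \ {−g}; the equilibrium ğ = −g is unstable. -/

import Mathlib

/-!
Along a solution `γ`, the height `V = g ⬝ᵥ γ` satisfies the Riccati equation
`V' = k ((g ⬝ᵥ g)² - V²)` (triple-product expansion and `γ ⬝ᵥ γ = g ⬝ᵥ g`), and on the sphere
`(γ - g) ⬝ᵥ (γ - g) = 2 (g ⬝ᵥ g - V)`. Hence the Euclidean distance to `g` never increases,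
which gives stability (the norm on `Fin 3 → ℝ` is the sup norm, within a factor `√3` of it), and `V` increases to `g ⬝ᵥ g` unless it starts at its minimum `-(g ⬝ᵥ g)`, i.e. unless
`γ 0 = -g`. For the instability of `-g`, the great half-circles
`tanh (k (g ⬝ᵥ g) t + x₀) • g + (cosh (k (g ⬝ᵥ g) t + x₀))⁻¹ • u` with `u ⊥ g`, `u ⬝ᵥ u = g ⬝ᵥ g`
are solutions that start arbitrarily close to `-g` and all converge to `g`.
-/

open Matrix

def skew (x : Fin 3 → ℝ) : Matrix (Fin 3) (Fin 3) ℝ :=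
  !![0, -x 2, x 1; x 2, 0, -x 0; -x 1, x 0, 0]

def cross (u v : Fin 3 → ℝ) : Fin 3 → ℝ := (skew u).mulVec v

/-- A solution of ğ̇ = k(ğ × g) × ğ evolving on the sphere 𝕊²_g. -/
def Sol (g : Fin 3 → ℝ) (k : ℝ) (γ : ℝ → Fin 3 → ℝ) : Prop :=
  (∀ t, HasDerivAt γ (k • cross (cross (γ t) g) (γ t)) t) ∧ (∀ t, γ t ⬝ᵥ γ t = g ⬝ᵥ g)

open Filter Topology Set

section DotProduct

variable {ι : Type*} [Fintype ι]

theorem dotProduct_self_nonneg (x : ι → ℝ) : 0 ≤ x ⬝ᵥ x :=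
  Finset.sum_nonneg fun i _ => mul_self_nonneg (x i)

theorem dotProduct_self_pos {x : ι → ℝ} (hx : x ≠ 0) : 0 < x ⬝ᵥ x :=
  (dotProduct_self_nonneg x).lt_of_ne' (dotProduct_self_eq_zero.not.2 hx)

theorem sq_dotProduct_le (u v : ι → ℝ) : (u ⬝ᵥ v) ^ 2 ≤ (u ⬝ᵥ u) * (v ⬝ᵥ v) := by
  simpa only [dotProduct, sq] using Finset.sum_mul_sq_le_sq_mul_sq Finset.univ u v

theorem norm_le_sqrt_dotProduct_self (x : ι → ℝ) : ‖x‖ ≤ √(x ⬝ᵥ x) := by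
  refine (pi_norm_le_iff_of_nonneg (Real.sqrt_nonneg _)).2 fun i => Real.abs_le_sqrt ?_
  simpa only [dotProduct, sq] using
    Finset.single_le_sum (fun j _ => mul_self_nonneg (x j)) (Finset.mem_univ i)

theorem sq_norm_le_dotProduct_self (x : ι → ℝ) : ‖x‖ ^ 2 ≤ x ⬝ᵥ x :=
  Real.sq_sqrt (dotProduct_self_nonneg x) ▸
    pow_le_pow_left₀ (norm_nonneg x) (norm_le_sqrt_dotProduct_self x) 2

theorem dotProduct_self_le_card_mul_sq_norm (x : ι → ℝ) :
    x ⬝ᵥ x ≤ Fintype.card ι * ‖x‖ ^ 2 := by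
  calc x ⬝ᵥ x = ∑ i, ‖x i‖ ^ 2 := by simp [dotProduct, sq]
    _ ≤ ∑ _i : ι, ‖x‖ ^ 2 := by gcongr with i; exact norm_le_pi_norm x i
    _ = Fintype.card ι * ‖x‖ ^ 2 := by simp

theorem HasDerivAt.const_dotProduct {f : ℝ → ι → ℝ} {f' : ι → ℝ} {t : ℝ} (v : ι → ℝ)
    (hf : HasDerivAt f f' t) : HasDerivAt (fun s => v ⬝ᵥ f s) (v ⬝ᵥ f') t := by
  simpa only [dotProduct] using
    HasDerivAt.fun_sum fun i _ => (hasDerivAt_pi.1 hf i).const_mul (v i)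

variable {x g : ι → ℝ}

theorem dotProduct_sub_self_of_dotProduct_self_eq (hx : x ⬝ᵥ x = g ⬝ᵥ g) :
    (x - g) ⬝ᵥ (x - g) = 2 * (g ⬝ᵥ g - g ⬝ᵥ x) := by
  simp only [sub_dotProduct, dotProduct_sub, dotProduct_comm x g, hx]
  ring

theorem dotProduct_add_self_of_dotProduct_self_eq (hx : x ⬝ᵥ x = g ⬝ᵥ g) :
    (x + g) ⬝ᵥ (x + g) = 2 * (g ⬝ᵥ g + g ⬝ᵥ x) := by
  simp only [add_dotProduct, dotProduct_add, dotProduct_comm x g, hx]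
  ring

end DotProduct

theorem cross_eq_crossProduct (u v : Fin 3 → ℝ) : cross u v = u ⨯₃ v := by
  ext i
  fin_cases i <;>
  · simp only [cross, skew, mulVec, dotProduct, cross_apply, Fin.sum_univ_three, of_apply,
      cons_val', cons_val_fin_one, cons_val_zero, cons_val_one, cons_val, Fin.zero_eta, Fin.mk_one,
      Fin.reduceFinMk]
    ring

theorem exists_crossProduct_single_ne_zero {g : Fin 3 → ℝ} (hg : g ≠ 0) :
    ∃ i, g ⨯₃ Pi.single i 1 ≠ 0 := by
  by_contra! h
  refine hg (funext fun i => ?_)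
  fin_cases i
  · simpa [cross_apply] using congrFun (h 1) 2
  · simpa [cross_apply] using congrFun (h 0) 2
  · simpa [cross_apply] using congrFun (h 0) 1

theorem exists_dotProduct_eq_zero_and_self_eq (g : Fin 3 → ℝ) :
    ∃ u : Fin 3 → ℝ, u ⬝ᵥ g = 0 ∧ u ⬝ᵥ u = g ⬝ᵥ g := by
  rcases eq_or_ne g 0 with rfl | hg
  · exact ⟨0, by simp, by simp⟩
  obtain ⟨i, hi⟩ := exists_crossProduct_single_ne_zero hg
  set w := g ⨯₃ Pi.single i 1
  have hw : 0 < w ⬝ᵥ w := dotProduct_self_pos hi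
  refine ⟨√(g ⬝ᵥ g / (w ⬝ᵥ w)) • w, ?_, ?_⟩
  · simp [w, dotProduct_comm _ g, dot_self_cross]
  · rw [smul_dotProduct, dotProduct_smul, smul_smul, smul_eq_mul, ← sq,
      Real.sq_sqrt (div_nonneg (dotProduct_self_nonneg g) hw.le), div_mul_cancel₀ _ hw.ne']

theorem Real.hasDerivAt_tanh (x : ℝ) : HasDerivAt Real.tanh ((Real.cosh x)⁻¹ ^ 2) x := by
  have h := (Real.hasDerivAt_sinh x).div (Real.hasDerivAt_cosh x) (Real.cosh_pos x).ne'
  rw [show Real.sinh / Real.cosh = Real.tanh from (funext Real.tanh_eq_sinh_div_cosh).symm] at h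
  refine h.congr_deriv ?_
  field_simp
  linear_combination Real.cosh_sq x

theorem Real.hasDerivAt_inv_cosh (x : ℝ) :
    HasDerivAt (fun x => (Real.cosh x)⁻¹) (-(Real.tanh x * (Real.cosh x)⁻¹)) x :=
  ((Real.hasDerivAt_cosh x).inv (Real.cosh_pos x).ne').congr_deriv (by
    rw [Real.tanh_eq_sinh_div_cosh]; ring)

theorem Real.tanh_sq_add_inv_cosh_sq (x : ℝ) : Real.tanh x ^ 2 + (Real.cosh x)⁻¹ ^ 2 = 1 := by
  rw [Real.tanh_eq_sinh_div_cosh]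
  field_simp
  linear_combination -Real.cosh_sq x

section Riccati

variable {V : ℝ → ℝ} {k A : ℝ}

theorem monotone_of_hasDerivAt_eq_mul_sq_sub_sq (hk : 0 ≤ k)
    (hV : ∀ t, HasDerivAt V (k * (A ^ 2 - V t ^ 2)) t) (hbound : ∀ t, |V t| ≤ A) :
    Monotone V :=
  monotone_of_deriv_nonneg (fun t => (hV t).differentiableAt) fun t => by
    rw [(hV t).deriv]
    exact mul_nonneg hk (by nlinarith [abs_le.1 (hbound t)])

theorem tendsto_of_hasDerivAt_eq_mul_sq_sub_sq (hk : 0 < k)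
    (hV : ∀ t, HasDerivAt V (k * (A ^ 2 - V t ^ 2)) t) (hbound : ∀ t, |V t| ≤ A)
    (h0 : -A < V 0) : Tendsto V atTop (𝓝 A) := by
  have hmono := monotone_of_hasDerivAt_eq_mul_sq_sub_sq hk.le hV hbound
  have hbdd : BddAbove (range V) := ⟨A, forall_mem_range.2 fun t => le_of_abs_le (hbound t)⟩
  suffices hsup : ⨆ t, V t = A by simpa [hsup] using tendsto_atTop_ciSup hmono hbdd
  refine le_antisymm (ciSup_le fun t => le_of_abs_le (hbound t)) (not_lt.1 fun hL => ?_)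
  set L := ⨆ t, V t
  -- if `L < A`, then `V' ≥ m > 0` on `[0, ∞)`, so `V` would leave `[-A, A]`
  set m := k * ((A - L) * (A + V 0))
  have hm : 0 < m := mul_pos hk (mul_pos (sub_pos.2 hL) (by linarith))
  have hdiff : Differentiable ℝ V := fun t => (hV t).differentiableAt
  have hderiv : ∀ t ∈ interior (Ici 0), m ≤ deriv V t := fun t ht => by
    rw [interior_Ici, mem_Ioi] at ht
    rw [(hV t).deriv]
    have hVL : V t ≤ L := le_ciSup hbdd t
    have hV0 : V 0 ≤ V t := hmono ht.le
    nlinarith [mul_le_mul (sub_le_sub_left hVL A) (add_le_add_left hV0 A) (by linarith)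
      (by linarith [abs_le.1 (hbound t)])]
  have hgrowth : ∀ T ≥ 0, m * T ≤ V T - V 0 := fun T hT => by
    simpa using (convex_Ici (0 : ℝ)).mul_sub_le_image_sub_of_le_deriv
      hdiff.continuous.continuousOn hdiff.differentiableOn hderiv 0 self_mem_Ici T hT hT
  have hA : 0 ≤ A := (abs_nonneg _).trans (hbound 0)
  have := hgrowth ((2 * A + 1) / m) (by positivity)
  rw [mul_div_cancel₀ _ hm.ne'] at this
  linarith [abs_le.1 (hbound 0), abs_le.1 (hbound ((2 * A + 1) / m))]

end Riccati

def IsLyapunovStable {E : Type*} [NormedAddCommGroup E] (IsSol : (ℝ → E) → Prop) (p : E) :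
    Prop :=
  ∀ ε > 0, ∃ δ > 0, ∀ γ, IsSol γ → ‖γ 0 - p‖ < δ → ∀ t ≥ (0 : ℝ), ‖γ t - p‖ < ε

namespace Sol

variable {g : Fin 3 → ℝ} {k : ℝ} {γ : ℝ → Fin 3 → ℝ}

theorem hasDerivAt_dotProduct (hγ : Sol g k γ) (t : ℝ) :
    HasDerivAt (fun t => g ⬝ᵥ γ t) (k * ((g ⬝ᵥ g) ^ 2 - (g ⬝ᵥ γ t) ^ 2)) t := by
  convert (hγ.1 t).const_dotProduct g using 1
  rw [cross_eq_crossProduct, cross_eq_crossProduct, cross_cross_eq_smul_sub_smul, hγ.2 t]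
  simp only [dotProduct_smul, dotProduct_sub, smul_eq_mul]
  ring

theorem abs_dotProduct_le (hγ : Sol g k γ) (t : ℝ) : |g ⬝ᵥ γ t| ≤ g ⬝ᵥ g :=
  abs_le_of_sq_le_sq (by simpa [hγ.2 t, sq] using sq_dotProduct_le g (γ t))
    (dotProduct_self_nonneg g)

theorem antitone_dotProduct_sub_self (hγ : Sol g k γ) (hk : 0 ≤ k) :
    Antitone fun t => (γ t - g) ⬝ᵥ (γ t - g) := fun s t hst => by
  simp only [dotProduct_sub_self_of_dotProduct_self_eq (hγ.2 _)]
  linarith [monotone_of_hasDerivAt_eq_mul_sq_sub_sq hk hγ.hasDerivAt_dotProduct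
    hγ.abs_dotProduct_le hst]

theorem tendsto_atTop (hγ : Sol g k γ) (hk : 0 < k) (h0 : γ 0 ≠ -g) :
    Tendsto γ atTop (𝓝 g) := by
  have hV0 : -(g ⬝ᵥ g) < g ⬝ᵥ γ 0 := by
    refine (neg_le_of_abs_le (hγ.abs_dotProduct_le 0)).lt_of_ne fun h => h0 ?_
    rw [← add_eq_zero_iff_eq_neg, ← dotProduct_self_eq_zero,
      dotProduct_add_self_of_dotProduct_self_eq (hγ.2 0), ← h]
    ring
  have hV := tendsto_of_hasDerivAt_eq_mul_sq_sub_sq hk hγ.hasDerivAt_dotProduct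
    hγ.abs_dotProduct_le hV0
  have hsqrt : Tendsto (fun t => √((γ t - g) ⬝ᵥ (γ t - g))) atTop (𝓝 0) := by
    simp only [dotProduct_sub_self_of_dotProduct_self_eq (hγ.2 _)]
    have := ((tendsto_const_nhds (x := g ⬝ᵥ g)).sub hV |>.const_mul 2).sqrt
    rwa [sub_self, mul_zero, Real.sqrt_zero] at this
  rw [tendsto_iff_norm_sub_tendsto_zero]
  exact squeeze_zero (fun t => norm_nonneg _) (fun t => norm_le_sqrt_dotProduct_self _) hsqrt

theorem isLyapunovStable (hk : 0 ≤ k) : IsLyapunovStable (Sol g k) g := by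
  intro ε hε
  refine ⟨ε / 2, half_pos hε, fun γ hγ h0 t ht => ?_⟩
  have h := calc
    ‖γ t - g‖ ^ 2 ≤ (γ t - g) ⬝ᵥ (γ t - g) := sq_norm_le_dotProduct_self _
    _ ≤ (γ 0 - g) ⬝ᵥ (γ 0 - g) := hγ.antitone_dotProduct_sub_self hk ht
    _ ≤ 3 * ‖γ 0 - g‖ ^ 2 := by simpa using dotProduct_self_le_card_mul_sq_norm (γ 0 - g)
  nlinarith [norm_nonneg (γ 0 - g), norm_nonneg (γ t - g)]

theorem of_circle {u : Fin 3 → ℝ} {c s : ℝ → ℝ} (hug : u ⬝ᵥ g = 0) (huu : u ⬝ᵥ u = g ⬝ᵥ g)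
    (hc : ∀ t, HasDerivAt c (k * (g ⬝ᵥ g) * s t ^ 2) t)
    (hs : ∀ t, HasDerivAt s (-(k * (g ⬝ᵥ g) * c t * s t)) t)
    (hcs : ∀ t, c t ^ 2 + s t ^ 2 = 1) :
    Sol g k fun t => c t • g + s t • u := by
  have hgu : g ⬝ᵥ u = 0 := by rw [dotProduct_comm, hug]
  have hdot : ∀ t, g ⬝ᵥ (c t • g + s t • u) = c t * (g ⬝ᵥ g) := fun t => by
    simp [dotProduct_add, hgu]
  have hnorm : ∀ t, (c t • g + s t • u) ⬝ᵥ (c t • g + s t • u) = g ⬝ᵥ g := fun t => by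
    simp only [add_dotProduct, dotProduct_add, smul_dotProduct, dotProduct_smul, hgu, hug, huu,
      smul_eq_mul]
    linear_combination (g ⬝ᵥ g) * hcs t
  refine ⟨fun t => ?_, hnorm⟩
  refine ((hc t).smul_const g).add ((hs t).smul_const u) |>.congr_deriv ?_
  rw [cross_eq_crossProduct, cross_eq_crossProduct, cross_cross_eq_smul_sub_smul, hnorm t, hdot t]
  ext i
  simp only [Pi.smul_apply, Pi.sub_apply, Pi.add_apply, smul_eq_mul]
  linear_combination k * (g ⬝ᵥ g) * g i * hcs t

theorem tanh_smul_add_inv_cosh_smul {u : Fin 3 → ℝ} (hug : u ⬝ᵥ g = 0)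
    (huu : u ⬝ᵥ u = g ⬝ᵥ g) (x₀ : ℝ) :
    Sol g k fun t => Real.tanh (k * (g ⬝ᵥ g) * t + x₀) • g
      + (Real.cosh (k * (g ⬝ᵥ g) * t + x₀))⁻¹ • u := by
  have hx : ∀ t, HasDerivAt (fun t => k * (g ⬝ᵥ g) * t + x₀) (k * (g ⬝ᵥ g)) t := fun t => by
    simpa using ((hasDerivAt_id t).const_mul (k * (g ⬝ᵥ g))).add_const x₀
  refine of_circle hug huu (fun t => ?_) (fun t => ?_) fun t => Real.tanh_sq_add_inv_cosh_sq _
  · exact ((Real.hasDerivAt_tanh _).comp t (hx t)).congr_deriv (by ring)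
  · exact ((Real.hasDerivAt_inv_cosh _).comp t (hx t)).congr_deriv (by ring)

theorem exists_dotProduct_eq (g : Fin 3 → ℝ) (k : ℝ) {a : ℝ} (ha : a ∈ Ioo (-1) 1) :
    ∃ γ, Sol g k γ ∧ g ⬝ᵥ γ 0 = a * (g ⬝ᵥ g) := by
  obtain ⟨u, hug, huu⟩ := exists_dotProduct_eq_zero_and_self_eq g
  refine ⟨_, tanh_smul_add_inv_cosh_smul hug huu (Real.artanh a), ?_⟩
  simp [dotProduct_add, dotProduct_comm g u, hug, Real.tanh_artanh ha]

theorem exists_ne_neg_near_neg (hg : g ≠ 0) (k : ℝ) {δ : ℝ} (hδ : 0 < δ) :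
    ∃ γ, Sol g k γ ∧ γ 0 ≠ -g ∧ ‖γ 0 - -g‖ < δ := by
  have hA := dotProduct_self_pos hg
  obtain ⟨a, ha₁, ha₂⟩ : ∃ a, -1 < a ∧ a < min 1 (δ ^ 2 / (2 * (g ⬝ᵥ g)) - 1) :=
    exists_between (lt_min (by norm_num)
      (by linarith [show 0 < δ ^ 2 / (2 * (g ⬝ᵥ g)) by positivity]))
  obtain ⟨γ, hγ, hγ0⟩ := exists_dotProduct_eq g k ⟨ha₁, ha₂.trans_le (min_le_left _ _)⟩
  refine ⟨γ, hγ, fun h => ?_, ?_⟩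
  · rw [h, dotProduct_neg] at hγ0
    nlinarith
  · have hsmall : (1 + a) * (2 * (g ⬝ᵥ g)) < δ ^ 2 :=
      (lt_div_iff₀ (by positivity)).1 (by linarith [ha₂.trans_le (min_le_right _ _)])
    have hdist := sq_norm_le_dotProduct_self (γ 0 + g)
    rw [dotProduct_add_self_of_dotProduct_self_eq (hγ.2 0), hγ0] at hdist
    rw [sub_neg_eq_add]
    exact lt_of_pow_lt_pow_left₀ 2 hδ.le (by linarith)

theorem not_isLyapunovStable_neg (hg : g ≠ 0) (hk : 0 < k) :
    ¬ IsLyapunovStable (Sol g k) (-g) := by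
  intro hstable
  obtain ⟨δ, hδ, hδ_stable⟩ := hstable ‖g‖ (norm_pos_iff.2 hg)
  obtain ⟨γ, hγ, hne, hnear⟩ := exists_ne_neg_near_neg hg k hδ
  have hlim : Tendsto (fun t => ‖γ t - -g‖) atTop (𝓝 ‖g - -g‖) :=
    ((hγ.tendsto_atTop hk hne).sub_const (-g)).norm
  have hfar : ‖g‖ < ‖g - -g‖ := by
    rw [sub_neg_eq_add, ← two_smul ℝ, norm_smul, Real.norm_ofNat]
    linarith [norm_pos_iff.2 hg]
  obtain ⟨t, ht, hfar_t⟩ :=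
    ((eventually_ge_atTop 0).and (hlim.eventually (lt_mem_nhds hfar))).exists
  exact (hδ_stable γ hγ hnear t ht).not_gt hfar_t

end Sol

/-- ğ = g is asymptotically stable with basin containing 𝕊²_g \ {−g}; ğ = −g is unstable. -/
theorem stmt15 (g : Fin 3 → ℝ) (hg : g ≠ 0) (k : ℝ) (hk : 0 < k) :
    (∀ ε > 0, ∃ δ > 0, ∀ γ, Sol g k γ → ‖γ 0 - g‖ < δ → ∀ t ≥ (0 : ℝ), ‖γ t - g‖ < ε) ∧
    (∀ γ, Sol g k γ → γ 0 ≠ -g → Filter.Tendsto γ Filter.atTop (nhds g)) ∧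
    ¬ (∀ ε > 0, ∃ δ > 0, ∀ γ, Sol g k γ → ‖γ 0 - (-g)‖ < δ →
        ∀ t ≥ (0 : ℝ), ‖γ t - (-g)‖ < ε) :=
  ⟨Sol.isLyapunovStable hk.le, fun _ hγ h0 => hγ.tendsto_atTop hk h0,
    Sol.not_isLyapunovStable_neg hg hk⟩
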